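/- arXiv:1208.1558 — 2 statements merged into one kernel-verified Lean document; each statement's English description precedes it below -/
import Mathlib

section
/- For the Pólya urn variable U_{r,n} and any k ≥ 1, the falling factorial moment satisfies E[U_{r,n}(U_{r,n}-1)⋯(U_{r,n}-k+1)] = r·(n-1)(n-2)⋯(n-k)/(r+k). -/
/-!
Conditioning on the first `d` steps gives, for every test function `f`, the one-step identity
`E[f(U_{d+1})] = E[(1 - (r+U)/(r+d+1)) f(U) + (r+U)/(r+d+1) f(U+1)]` with `U = U_{r,d}`.
For the falling factorial `f = x^{(k+1)}` the right-hand side is a combination of the moments of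
orders `k+1` and `k` at step `d`, and the claimed formula propagates by induction on `d`.
-/

/-- Pólya urn pmf: `U_{r,n}` has pmf `polyaPMF r (n-1)`. -/
noncomputable def polyaPMF (r : ℝ) : ℕ → ℕ → ℝ
  | 0, k => if k = 0 then 1 else 0
  | d + 1, 0 => polyaPMF r d 0 * (1 - r / (r + (d + 1)))
  | d + 1, k + 1 =>
      polyaPMF r d (k + 1) * (1 - (r + (k + 1)) / (r + (d + 1)))
        + polyaPMF r d k * ((r + k) / (r + (d + 1)))

open Finset

section

variable (r : ℝ)

lemma polyaPMF_eq_zero_of_lt {d j : ℕ} (h : d < j) : polyaPMF r d j = 0 := by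
  induction d generalizing j with
  | zero => cases j with
    | zero => omega
    | succ j => simp [polyaPMF]
  | succ d ih => cases j with
    | zero => omega
    | succ j =>
      simp only [polyaPMF, ih (show d < j + 1 by omega), ih (show d < j by omega), zero_mul,
        add_zero]

/-- The expectation `E[f(U_{r,d+1})]`. -/
noncomputable def polyaExpect (d : ℕ) (f : ℕ → ℝ) : ℝ :=
  ∑ j ∈ range (d + 1), polyaPMF r d j * f j

lemma polyaExpect_zero (f : ℕ → ℝ) : polyaExpect r 0 f = f 0 := by
  simp [polyaExpect, polyaPMF]

lemma polyaExpect_succ (d : ℕ) (f : ℕ → ℝ) :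
    polyaExpect r (d + 1) f = polyaExpect r d fun j =>
      (1 - (r + j) / (r + (d + 1))) * f j + (r + j) / (r + (d + 1)) * f (j + 1) := by
  set stay : ℕ → ℝ := fun j => polyaPMF r d j * ((1 - (r + j) / (r + (d + 1))) * f j)
  have h_stay :
      ∑ j ∈ range (d + 1), stay j = ∑ j ∈ range (d + 1), stay (j + 1) + stay 0 := by
    rw [← sum_range_succ' stay, sum_range_succ stay (d + 1)]
    simp [stay, polyaPMF_eq_zero_of_lt r (lt_add_one d)]
  simp only [polyaExpect, mul_add, sum_add_distrib]
  rw [h_stay, sum_range_succ', add_right_comm, ← sum_add_distrib]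
  simp only [polyaPMF, stay]
  push_cast
  congr 1
  · exact sum_congr rfl fun j _ => by ring
  · ring

lemma polyaExpect_one (d : ℕ) : polyaExpect r d (fun _ => 1) = 1 := by
  induction d with
  | zero => exact polyaExpect_zero r _
  | succ d ih => rw [polyaExpect_succ]; simpa using ih

lemma prod_range_succ_add_one_sub (x : ℝ) (k : ℕ) :
    ∏ i ∈ range (k + 1), (x + 1 - i) = (x + 1) * ∏ i ∈ range k, (x - i) := by
  rw [prod_range_succ']
  push_cast
  simp only [add_sub_add_right_eq_sub, sub_zero, mul_comm]

lemma polyaExpect_falling_succ (d k : ℕ) (hc : r + (d + 1) ≠ 0) :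
    polyaExpect r (d + 1) (fun j => ∏ i ∈ range (k + 1), ((j : ℝ) - i))
      = (1 + (k + 1) / (r + (d + 1)))
          * polyaExpect r d (fun j => ∏ i ∈ range (k + 1), ((j : ℝ) - i))
        + (k + 1) * (r + k) / (r + (d + 1))
          * polyaExpect r d (fun j => ∏ i ∈ range k, ((j : ℝ) - i)) := by
  rw [polyaExpect_succ]
  simp only [polyaExpect, mul_sum, ← sum_add_distrib]
  refine sum_congr rfl fun j _ => ?_
  push_cast
  rw [prod_range_succ_add_one_sub, prod_range_succ]
  field_simp
  ring

theorem mul_polyaExpect_falling (hr : 0 ≤ r) (d k : ℕ) :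
    (r + k) * polyaExpect r d (fun j => ∏ i ∈ range k, ((j : ℝ) - i))
      = r * ∏ i ∈ range k, ((d : ℝ) - i) := by
  induction d generalizing k with
  | zero =>
    rw [polyaExpect_zero]
    cases k with
    | zero => simp
    | succ k => simp [prod_range_succ']
  | succ d ih =>
    cases k with
    | zero => simp [polyaExpect_one]
    | succ k =>
      have hc : r + (d + 1) ≠ 0 := by positivity
      have h1 := ih (k + 1)
      have h0 := ih k
      rw [prod_range_succ] at h1
      rw [polyaExpect_falling_succ r d k hc]
      push_cast at h1 h0 ⊢
      rw [prod_range_succ_add_one_sub]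
      field_simp
      linear_combination (r + (d + 1) + (k + 1)) * h1 + (k + 1) * (r + (k + 1)) * h0

end

theorem stmt4_general (r : ℝ) (hr : 0 < r) (n k : ℕ) (hn : 1 ≤ n) :
    ∑ j ∈ Finset.range n, polyaPMF r (n - 1) j * ∏ i ∈ Finset.range k, ((j : ℝ) - i)
      = r * (∏ i ∈ Finset.range k, ((n : ℝ) - 1 - i)) / (r + k) := by
  obtain ⟨d, rfl⟩ := Nat.exists_eq_add_of_le' hn
  rw [eq_div_iff (by positivity), mul_comm]
  simpa [polyaExpect] using mul_polyaExpect_falling r hr.le d k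

/-- Falling factorial moments of the Pólya urn count:
`E[U_{r,n}(U_{r,n}-1)⋯(U_{r,n}-k+1)] = r (n-1)(n-2)⋯(n-k)/(r+k)`.
Since `U_{r,n} ≤ n-1` the expectation is a finite sum over `j < n`. -/
theorem stmt4 (r : ℝ) (hr : 0 < r) (n k : ℕ) (hn : 1 ≤ n) (hk : 1 ≤ k) :
    ∑ j ∈ Finset.range n, polyaPMF r (n - 1) j * ∏ i ∈ Finset.range k, ((j : ℝ) - i)
      = r * (∏ i ∈ Finset.range k, ((n : ℝ) - 1 - i)) / (r + k) :=
  stmt4_general r hr n k hn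
end

section
/- If r > 0 and 0 ≤ ε < p ≤ 1, then the total variation distance between NB(r,p) and NB(r,p-ε) is at most rε/(p-ε). -/
/-!
Write `q = p - ε`. Pointwise `NB(r, q)` dominates `(q / p) ^ r • NB(r, p)`: the factor `p ^ r`
is rescaled exactly and `(1 - p) ^ k ≤ (1 - q) ^ k`. Two probability vectors `a, b` with
`c • a ≤ b` share mass at least `c`, so their total variation distance is at most `1 - c`, and
`1 - (q / p) ^ r ≤ r log (p / q) ≤ r (p - q) / q`. That the pmf sums to one is the binomial series
`∑ₖ (r + k - 1 choose k) xᵏ = (1 - x) ^ (-r)` at `x = 1 - p`.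
-/

/-- The negative binomial pmf `NB(r,p)`. -/
noncomputable def nbPMF (r p : ℝ) (k : ℕ) : ℝ :=
  Real.Gamma (r + k) / (Nat.factorial k * Real.Gamma r) * (1 - p) ^ k * p ^ r

open Real

theorem Real.Gamma_add_nat_div_Gamma_eq {r : ℝ} (hr : ∀ k : ℕ, r ≠ -k) (n : ℕ) :
    Gamma (r + n) / Gamma r = (ascPochhammer ℝ n).eval r := by
  induction n with
  | zero => simp [Gamma_ne_zero hr]
  | succ n ih =>
    have hrn : r + n ≠ 0 := fun h => hr n (by linarith)
    rw [Nat.cast_succ, ← add_assoc, Gamma_add_one hrn, ascPochhammer_succ_right,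
      Polynomial.eval_mul, ← ih, mul_div_assoc]
    simp [mul_comm]

theorem Ring.choose_add_nat_sub_one_eq_Gamma {r : ℝ} (hr : ∀ k : ℕ, r ≠ -k) (k : ℕ) :
    Ring.choose (r + k - 1) k = Gamma (r + k) / (k.factorial * Gamma r) := by
  rw [Ring.choose_eq_smul, Polynomial.descPochhammer_smeval_eq_ascPochhammer,
    Polynomial.ascPochhammer_smeval_eq_eval, show r + k - 1 - k + 1 = r by ring,
    ← Gamma_add_nat_div_Gamma_eq hr, smul_eq_mul]
  field_simp

theorem nbPMF_eq_choose {r : ℝ} (hr : ∀ k : ℕ, r ≠ -k) (p : ℝ) (k : ℕ) :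
    nbPMF r p k = Ring.choose (r + k - 1) k * (1 - p) ^ k * p ^ r := by
  rw [nbPMF, Ring.choose_add_nat_sub_one_eq_Gamma hr]

theorem nbPMF_nonneg {r p : ℝ} (hr : 0 < r) (hp0 : 0 ≤ p) (hp1 : p ≤ 1) (k : ℕ) :
    0 ≤ nbPMF r p k := by
  have : 0 < Gamma (r + k) := Gamma_pos_of_pos (by positivity)
  have : 0 < Gamma r := Gamma_pos_of_pos hr
  have : 0 ≤ 1 - p := by linarith
  unfold nbPMF
  positivity

theorem hasSum_nbPMF {r p : ℝ} (hr : 0 < r) (hp0 : 0 < p) (hp1 : p ≤ 1) :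
    HasSum (nbPMF r p) 1 := by
  have hr' : ∀ k : ℕ, r ≠ -k := fun k h => by
    have : (0 : ℝ) ≤ k := k.cast_nonneg
    linarith
  have hball : 1 - p ∈ Metric.eball (0 : ℝ) 1 := by
    rw [← ENNReal.ofReal_one, Metric.eball_ofReal, mem_ball_zero_iff, norm_eq_abs, abs_lt]
    constructor <;> linarith
  have hbinom := (one_div_one_sub_rpow_hasFPowerSeriesOnBall_zero r).hasSum hball
  simp only [FormalMultilinearSeries.ofScalars_apply_eq, smul_eq_mul, zero_add,
    sub_sub_cancel] at hbinom
  have h := hbinom.mul_right (p ^ r)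
  rwa [one_div_mul_cancel (rpow_pos_of_pos hp0 r).ne', ← funext (nbPMF_eq_choose hr' p)] at h

theorem rpow_div_mul_nbPMF_le_nbPMF {r p q : ℝ} (hr : 0 < r) (hq : 0 < q) (hqp : q ≤ p)
    (hp : p ≤ 1) (k : ℕ) : (q / p) ^ r * nbPMF r p k ≤ nbPMF r q k := by
  have hp0 : 0 < p := hq.trans_le hqp
  have hscale : (q / p) ^ r * p ^ r = q ^ r := by
    rw [← mul_rpow (div_pos hq hp0).le hp0.le, div_mul_cancel₀ _ hp0.ne']
  have hgeom : (1 - p) ^ k ≤ (1 - q) ^ k := pow_le_pow_left₀ (by linarith) (by linarith) k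
  have : 0 < Gamma (r + k) := Gamma_pos_of_pos (by positivity)
  have : 0 < Gamma r := Gamma_pos_of_pos hr
  calc (q / p) ^ r * nbPMF r p k
      = Gamma (r + k) / (k.factorial * Gamma r) * (1 - p) ^ k * q ^ r := by
        rw [nbPMF, ← hscale]; ring
    _ ≤ nbPMF r q k := by unfold nbPMF; gcongr

theorem half_tsum_abs_sub_le_one_sub {ι : Type*} {a b : ι → ℝ} {c : ℝ} (ha : HasSum a 1)
    (hb : HasSum b 1) (ha0 : ∀ i, 0 ≤ a i) (hc : c ≤ 1) (hcb : ∀ i, c * a i ≤ b i) :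
    (1 / 2) * ∑' i, |a i - b i| ≤ 1 - c := by
  have hbound : ∀ i, |a i - b i| ≤ a i + b i - 2 * (c * a i) := fun i => by
    have : c * a i ≤ a i := mul_le_of_le_one_left (ha0 i) hc
    rw [abs_le]
    constructor <;> linarith [hcb i]
  have hsum : HasSum (fun i => a i + b i - 2 * (c * a i)) (1 + 1 - 2 * (c * 1)) :=
    (ha.add hb).sub ((ha.mul_left c).mul_left 2)
  have := Summable.tsum_le_tsum hbound
    (hsum.summable.of_nonneg_of_le (fun i => abs_nonneg _) hbound) hsum.summable
  rw [hsum.tsum_eq] at this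
  linarith

theorem one_sub_div_rpow_le {p q r : ℝ} (hp : 0 < p) (hq : 0 < q) (hr : 0 ≤ r) :
    1 - (q / p) ^ r ≤ r * (p - q) / q := by
  have hlog : 1 - p / q ≤ log (q / p) := by
    simpa using one_sub_inv_le_log_of_pos (div_pos hq hp)
  have hexp : r * log (q / p) + 1 ≤ (q / p) ^ r := by
    rw [rpow_def_of_pos (div_pos hq hp), mul_comm]
    exact add_one_le_exp _
  have : r * (1 - p / q) ≤ r * log (q / p) := mul_le_mul_of_nonneg_left hlog hr
  have : r * (1 - p / q) = -(r * (p - q) / q) := by field_simp; ring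
  linarith

/-- If `r > 0` and `0 ≤ ε < p ≤ 1`, then
`d_TV(NB(r,p), NB(r,p-ε)) = (1/2)∑_k |P_{NB(r,p)}(k) - P_{NB(r,p-ε)}(k)| ≤ rε/(p-ε)`. -/
theorem stmt10 (r p ε : ℝ) (hr : 0 < r) (hε : 0 ≤ ε) (hεp : ε < p) (hp : p ≤ 1) :
    (1 / 2) * ∑' k : ℕ, |nbPMF r p k - nbPMF r (p - ε) k| ≤ r * ε / (p - ε) := by
  have hp0 : 0 < p := hε.trans_lt hεp
  have hq0 : 0 < p - ε := by linarith
  have hqp : p - ε ≤ p := by linarith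
  calc (1 / 2) * ∑' k : ℕ, |nbPMF r p k - nbPMF r (p - ε) k|
      ≤ 1 - ((p - ε) / p) ^ r :=
        half_tsum_abs_sub_le_one_sub (hasSum_nbPMF hr hp0 hp)
          (hasSum_nbPMF hr hq0 (hqp.trans hp)) (nbPMF_nonneg hr hp0.le hp)
          (rpow_le_one (div_nonneg hq0.le hp0.le) ((div_le_one hp0).2 hqp) hr.le)
          (rpow_div_mul_nbPMF_le_nbPMF hr hq0 hqp hp)
    _ ≤ r * (p - (p - ε)) / (p - ε) := one_sub_div_rpow_le hp0 hq0 hr.le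
    _ = r * ε / (p - ε) := by rw [sub_sub_cancel]
end
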